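/- Let t ≥ 1 and let (x_0, y_0), …, (x_t, y_t) ∈ Z² with 0 = x_0 < x_1 < … < x_t and y_0 > y_1 > … > y_t, with strictly increasing slopes, let N : [0, x_t] → R be the piecewise linear convex function with these vertices, and set E_i = x_i − x_{i−1}, H_i = y_{i−1} − y_i, d_i = gcd(E_i, H_i). Let h be a positive integer such that every side has slope strictly less than −h, i.e. H_i > h·E_i for all i, and set ℓ = x_t. Then the number of points (a, b) ∈ Z² with 1 ≤ a ≤ x_t, b ≤ N(a), and b > y_t + h(x_t − a) equals Σ_{i=1}^{t} (E_iH_i − E_i − H_i + d_i)/2 + Σ_{1 ≤ i < j ≤ t} E_iH_j − hℓ(ℓ−1)/2. -/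

import Mathlib

/-!
Count the points column by column. Over an abscissa `a` of the `i`-th side there are
`⌊N a⌋ - (y_t + h (ℓ - a))` of them, a nonnegative number because every side is steeper than
the cut line. Writing `⌊N a⌋ = y_i + ⌊H_i (x_i - a) / E_i⌋`, the columns over the `i`-th side
contribute `E_i (y_i - y_t) = Σ_{j > i} E_i H_j` plus the floor sum
`Σ_{0 ≤ m < E_i} ⌊H_i m / E_i⌋ = (E_i H_i - E_i - H_i + d_i) / 2`; for the latter, pair `m` with
`E_i - m`: the two floors add up to `H_i - 1`, or to `H_i` when `E_i ∣ H_i m`, which happens for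
exactly `d_i` values of `m ∈ (0, E_i]`. The cut line removes `h Σ_a (ℓ - a) = h ℓ (ℓ - 1) / 2`
points.
-/

open Finset

namespace Int

theorem mul_ediv_add_mul_sub_ediv {E : ℤ} (hE : 0 < E) (H m : ℤ) :
    H * m / E + H * (E - m) / E + 1 = H + if E ∣ H * m then 1 else 0 := by
  rw [show H * (E - m) = -(H * m) + H * E by ring, Int.add_mul_ediv_right _ _ hE.ne',
    Int.neg_ediv, Int.sign_eq_one_of_pos hE]
  split_ifs <;> ring

theorem card_filter_dvd_mul_Ioc {E : ℤ} (hE : 0 < E) (H : ℤ) :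
    (#{m ∈ Ioc 0 E | E ∣ H * m} : ℤ) = Int.gcd E H := by
  set g : ℤ := (Int.gcd E H : ℤ) with hg_def
  obtain ⟨c, hc⟩ : g ∣ E := Int.gcd_dvd_left E H
  have hg : 0 < g := Int.natCast_pos.2 (Int.gcd_pos_of_ne_zero_left H hE.ne')
  have hc0 : 0 < c := pos_of_mul_pos_right (hc ▸ hE) hg.le
  have hdvd : ∀ m, E ∣ H * m ↔ c ∣ m := fun m => by
    rw [← dvd_gcd_mul_iff_dvd_mul, ← hg_def, hc]
    exact mul_dvd_mul_iff_left hg.ne'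
  simp_rw [hdvd]
  rw [Int.Ioc_filter_dvd_card 0 E hc0, hc]
  push_cast
  rw [mul_div_cancel_right₀ _ (by exact_mod_cast hc0.ne')]
  simp [hg.le]

theorem sum_Ioc_const_sub {M : Type*} [AddCommMonoid M] (f : ℤ → M) (a b c : ℤ) :
    ∑ x ∈ Ioc a b, f (c - x) = ∑ x ∈ Ico (c - b) (c - a), f x := by
  refine sum_nbij' (c - ·) (c - ·) ?_ ?_ (fun x _ => sub_sub_cancel c x)
    (fun x _ => sub_sub_cancel c x) (fun _ _ => rfl) <;>
  · intro x hx
    simp only [mem_Ioc, mem_Ico] at hx ⊢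
    omega

theorem two_mul_sum_Ico_mul_ediv {E : ℤ} (hE : 0 < E) (H : ℤ) :
    2 * ∑ m ∈ Ico 0 E, H * m / E + E + H = E * H + Int.gcd E H := by
  have hrefl : ∑ m ∈ Ico 0 E, H * m / E = ∑ m ∈ Ioc 0 E, H * (E - m) / E := by
    simpa using (sum_Ioc_const_sub (fun m => H * m / E) 0 E E).symm
  have hends : ∑ m ∈ Ico 0 E, H * m / E + H = ∑ m ∈ Ioc 0 E, H * m / E := by
    have h := (sum_Ico_add_eq_sum_Icc (f := fun m => H * m / E) hE.le).trans
      (sum_Ioc_add_eq_sum_Icc hE.le).symm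
    simpa [Int.mul_ediv_cancel _ hE.ne'] using h
  have hpair := sum_congr rfl fun m (_ : m ∈ Ioc 0 E) => mul_ediv_add_mul_sub_ediv hE H m
  simp only [sum_add_distrib, sum_boole, sum_const, card_Ioc, ← hends, ← hrefl,
    card_filter_dvd_mul_Ioc hE] at hpair
  simp only [sub_zero, Int.nsmul_eq_mul, Int.ofNat_toNat, sup_of_le_left hE.le, mul_one] at hpair
  linarith

theorem two_mul_sum_Ioc_sub {n : ℤ} (hn : 0 ≤ n) : 2 * ∑ a ∈ Ioc 0 n, (n - a) = n * (n - 1) := by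
  rw [sum_Ioc_const_sub (fun a => a), sub_self, sub_zero]
  obtain rfl | hn := hn.eq_or_lt
  · simp
  · have h := two_mul_sum_Ico_mul_ediv hn n
    simp only [Int.mul_ediv_cancel_left _ hn.ne', Int.gcd_self, Int.natAbs_of_nonneg hn.le] at h
    linarith

end Int

theorem Finset.sum_Ioc_add_sum_Ioc {α M : Type*} [LinearOrder α] [LocallyFiniteOrder α]
    [AddCommMonoid M] (f : α → M) {a b c : α} (hab : a ≤ b) (hbc : b ≤ c) :
    ∑ x ∈ Ioc a b, f x + ∑ x ∈ Ioc b c, f x = ∑ x ∈ Ioc a c, f x := by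
  rw [← sum_union (Ioc_disjoint_Ioc_of_le le_rfl), Ioc_union_Ioc_eq_Ioc hab hbc]

theorem Monotone.sum_Ioc_eq_sum_sum_Ioc {α M : Type*} [LinearOrder α] [LocallyFiniteOrder α]
    [AddCommMonoid M] (f : α → M) {n : ℕ} {x : Fin (n + 1) → α} (hx : Monotone x) :
    ∑ a ∈ Ioc (x 0) (x (Fin.last n)), f a
      = ∑ i : Fin n, ∑ a ∈ Ioc (x i.castSucc) (x i.succ), f a := by
  induction n with
  | zero => simp
  | succ n ih =>
    have h := ih (hx.comp Fin.strictMono_castSucc.monotone)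
    simp only [Function.comp_apply, Fin.castSucc_zero, ← Fin.succ_castSucc] at h
    rw [Fin.sum_univ_castSucc, ← h, sum_Ioc_add_sum_Ioc f (hx (Fin.zero_le _))
      (hx (Fin.castSucc_le_succ _)), Fin.succ_last]

theorem Fin.apply_sub_apply_last {G : Type*} [AddCommGroup G] {n : ℕ} (f : Fin (n + 1) → G)
    (j : Fin (n + 1)) :
    f j - f (Fin.last n) = ∑ i : Fin n, if j ≤ i.castSucc then f i.castSucc - f i.succ else 0 := by
  induction j using Fin.reverseInduction with
  | last => simp [(Fin.castSucc_lt_last _).not_ge]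
  | cast j ih =>
    have hsplit : ∀ i : Fin n, (if j.castSucc ≤ i.castSucc then f i.castSucc - f i.succ else 0)
        = (if j = i then f i.castSucc - f i.succ else 0)
          + if j.succ ≤ i.castSucc then f i.castSucc - f i.succ else 0 := fun i => by
      simp only [Fin.castSucc_le_castSucc_iff, Fin.succ_le_castSucc_iff]
      rcases lt_trichotomy j i with h | rfl | h
      · simp [h, h.le, h.ne]
      · simp
      · simp [h.not_ge, h.not_gt, h.ne']
    rw [sum_congr rfl fun i _ => hsplit i, sum_add_distrib, sum_ite_eq, if_pos (mem_univ _), ← ih]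
    abel

theorem mul_sub_last_le_sub_last {n : ℕ} {x y : Fin (n + 1) → ℤ} {h : ℤ}
    (hslope : ∀ i : Fin n, h * (x i.succ - x i.castSucc) ≤ y i.castSucc - y i.succ)
    (j : Fin (n + 1)) : h * (x (Fin.last n) - x j) ≤ y j - y (Fin.last n) := by
  induction j using Fin.reverseInduction with
  | last => simp
  | cast j ih => linarith [hslope j]

theorem ncard_setOf_mem_lt_le {α : Type*} [DecidableEq α] (s : Finset α) (lo hi : α → ℤ) :
    {q : α × ℤ | q.1 ∈ s ∧ lo q.1 < q.2 ∧ q.2 ≤ hi q.1}.ncard = ∑ a ∈ s, (hi a - lo a).toNat := by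
  have hset : {q : α × ℤ | q.1 ∈ s ∧ lo q.1 < q.2 ∧ q.2 ≤ hi q.1}
      = ↑(s.biUnion fun a => {a} ×ˢ Ioc (lo a) (hi a)) := by
    ext ⟨a, b⟩
    simp only [Set.mem_ofPred_eq, coe_biUnion, mem_coe, Set.mem_iUnion, mem_product,
      mem_singleton, mem_Ioc, exists_prop]
    exact ⟨fun ⟨ha, hb⟩ => ⟨a, ha, rfl, hb⟩, fun ⟨_, ha, rfl, hb⟩ => ⟨ha, hb⟩⟩
  rw [hset, Set.ncard_coe_finset, card_biUnion]
  · simp [Int.card_Ioc]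
  · intro a _ a' _ hne
    simp only [disjoint_left, mem_product, mem_singleton]
    rintro ⟨b, c⟩ ⟨rfl, _⟩ ⟨rfl, _⟩
    exact hne rfl

theorem floor_eq_of_eq_line {x₀ x₁ y₀ y₁ a : ℤ} {N : ℚ → ℚ} (hlt : x₀ < x₁)
    (hN : N a = y₀ + ((y₁ : ℚ) - y₀) / ((x₁ : ℚ) - x₀) * (a - x₀)) :
    ⌊N a⌋ = y₁ + (y₀ - y₁) * (x₁ - a) / (x₁ - x₀) := by
  have hpos : (x₁ : ℚ) - x₀ ≠ 0 := by exact_mod_cast (sub_pos.2 hlt).ne'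
  have hNa : N a = (((x₁ - x₀) * y₁ + (y₀ - y₁) * (x₁ - a) : ℤ) : ℚ) / ((x₁ - x₀ : ℤ) : ℚ) := by
    rw [hN]
    push_cast
    field_simp
    ring
  rw [hNa, Int.floor_div_cast_of_nonneg (sub_pos.2 hlt).le, Int.floor_intCast,
    Int.mul_add_ediv_left _ _ (sub_pos.2 hlt).ne']

theorem le_floor_of_eq_line {x₀ x₁ y₀ y₁ a h : ℤ} {N : ℚ → ℚ} (hlt : x₀ < x₁)
    (hN : N a = y₀ + ((y₁ : ℚ) - y₀) / ((x₁ : ℚ) - x₀) * (a - x₀))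
    (hslope : h * (x₁ - x₀) ≤ y₀ - y₁) (ha : a ≤ x₁) :
    y₁ + h * (x₁ - a) ≤ ⌊N a⌋ := by
  rw [floor_eq_of_eq_line hlt hN, add_le_add_iff_left,
    Int.le_ediv_iff_mul_le (sub_pos.2 hlt)]
  nlinarith [mul_le_mul_of_nonneg_right hslope (sub_nonneg.2 ha)]

theorem sum_Ioc_floor_sub_eq {x₀ x₁ y₀ y₁ : ℤ} {N : ℚ → ℚ} (hlt : x₀ < x₁)
    (hN : ∀ a : ℚ, x₀ ≤ a → a ≤ x₁ → N a = y₀ + ((y₁ : ℚ) - y₀) / ((x₁ : ℚ) - x₀) * (a - x₀))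
    (c : ℤ) :
    ∑ a ∈ Ioc x₀ x₁, (⌊N a⌋ - c)
      = ∑ m ∈ Ico 0 (x₁ - x₀), (y₀ - y₁) * m / (x₁ - x₀) + (x₁ - x₀) * (y₁ - c) := by
  have hcol : ∀ a ∈ Ioc x₀ x₁, ⌊N a⌋ - c = (y₀ - y₁) * (x₁ - a) / (x₁ - x₀) + (y₁ - c) :=
    fun a ha => by
      rw [mem_Ioc] at ha
      rw [floor_eq_of_eq_line hlt (hN a (by exact_mod_cast ha.1.le) (by exact_mod_cast ha.2))]
      ring
  rw [sum_congr rfl hcol, sum_add_distrib,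
    Int.sum_Ioc_const_sub (fun m => (y₀ - y₁) * m / (x₁ - x₀)), sub_self, sum_const,
    Int.card_Ioc, nsmul_eq_mul, Int.toNat_of_nonneg (sub_pos.2 hlt).le]

theorem sum_Ioc_toNat_floor_sub_line {x₀ x₁ y₀ y₁ c X h : ℤ} {N : ℚ → ℚ} (hlt : x₀ < x₁)
    (hN : ∀ a : ℚ, x₀ ≤ a → a ≤ x₁ → N a = y₀ + ((y₁ : ℚ) - y₀) / ((x₁ : ℚ) - x₀) * (a - x₀))
    (hslope : h * (x₁ - x₀) ≤ y₀ - y₁) (hend : c + h * (X - x₁) ≤ y₁) :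
    ∑ a ∈ Ioc x₀ x₁, ((⌊N a⌋ - (c + h * (X - a))).toNat : ℤ)
      = ∑ m ∈ Ico 0 (x₁ - x₀), (y₀ - y₁) * m / (x₁ - x₀) + (x₁ - x₀) * (y₁ - c)
        - ∑ a ∈ Ioc x₀ x₁, h * (X - a) := by
  have hcol : ∀ a ∈ Ioc x₀ x₁, ((⌊N a⌋ - (c + h * (X - a))).toNat : ℤ)
      = (⌊N a⌋ - c) - h * (X - a) := fun a ha => by
    rw [mem_Ioc] at ha
    have hline := le_floor_of_eq_line hlt
      (hN a (by exact_mod_cast ha.1.le) (by exact_mod_cast ha.2)) hslope ha.2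
    rw [Int.toNat_of_nonneg (by linarith)]
    ring
  rw [sum_congr rfl hcol, sum_sub_distrib, sum_Ioc_floor_sub_eq hlt hN]

theorem stmt_15_general (t : ℕ) (x y : Fin (t + 1) → ℤ)
    (hx0 : x 0 = 0) (hx : StrictMono x)
    (N : ℚ → ℚ)
    (hN : ∀ i : Fin t, ∀ a : ℚ, (x i.castSucc : ℚ) ≤ a → a ≤ (x i.succ : ℚ) →
      N a = (y i.castSucc : ℚ)
        + ((y i.succ : ℚ) - (y i.castSucc : ℚ)) / ((x i.succ : ℚ) - (x i.castSucc : ℚ))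
          * (a - (x i.castSucc : ℚ)))
    (E H : Fin t → ℤ)
    (hE : ∀ i, E i = x i.succ - x i.castSucc)
    (hH : ∀ i, H i = y i.castSucc - y i.succ)
    (d : Fin t → ℤ) (hd : ∀ i, d i = Int.gcd (E i) (H i))
    (h : ℕ)
    (hcut : ∀ i, (h : ℤ) * E i < H i)
    (ℓ : ℤ) (hℓ : ℓ = x (Fin.last t)) :
    ({q : ℤ × ℤ | 1 ≤ q.1 ∧ q.1 ≤ x (Fin.last t)
        ∧ y (Fin.last t) + (h : ℤ) * (x (Fin.last t) - q.1) < q.2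
        ∧ (q.2 : ℚ) ≤ N (q.1 : ℚ)}.ncard : ℤ)
      = ∑ i, (E i * H i - E i - H i + d i) / 2
        + ∑ i, ∑ j, (if i < j then E i * H j else 0)
        - (h : ℤ) * ℓ * (ℓ - 1) / 2 := by
  have hlt : ∀ i : Fin t, x i.castSucc < x i.succ := fun _ => hx Fin.castSucc_lt_succ
  have hslope : ∀ i : Fin t, (h : ℤ) * (x i.succ - x i.castSucc) ≤ y i.castSucc - y i.succ :=
    fun i => by rw [← hE i, ← hH i]; exact (hcut i).le
  have hvert : ∀ i : Fin t,
      y (Fin.last t) + h * (x (Fin.last t) - x i.succ) ≤ y i.succ := fun i => by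
    linarith [mul_sub_last_le_sub_last hslope i.succ]
  have hlattice : ∀ i, (E i * H i - E i - H i + d i) / 2 = ∑ m ∈ Ico 0 (E i), H i * m / E i :=
    fun i => by
      have := Int.two_mul_sum_Ico_mul_ediv (hE i ▸ sub_pos.2 (hlt i)) (H i)
      rw [hd i]
      omega
  have hupper : ∀ i, ∑ j, (if i < j then E i * H j else 0)
      = E i * (y i.succ - y (Fin.last t)) := fun i => by
    simp [Fin.apply_sub_apply_last y i.succ, mul_sum, Fin.succ_le_castSucc_iff, hH]
  have hgauss : (h : ℤ) * ℓ * (ℓ - 1) / 2 = ∑ a ∈ Ioc (x 0) (x (Fin.last t)), h * (ℓ - a) := by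
    rw [← mul_sum, hx0, ← hℓ, mul_assoc,
      ← Int.two_mul_sum_Ioc_sub (hℓ ▸ hx0 ▸ hx.monotone (Fin.zero_le _) : 0 ≤ ℓ),
      mul_left_comm, Int.mul_ediv_cancel_left _ two_ne_zero]
  have hset : {q : ℤ × ℤ | 1 ≤ q.1 ∧ q.1 ≤ x (Fin.last t)
        ∧ y (Fin.last t) + (h : ℤ) * (x (Fin.last t) - q.1) < q.2
        ∧ (q.2 : ℚ) ≤ N (q.1 : ℚ)}
      = {q : ℤ × ℤ | q.1 ∈ Ioc (x 0) (x (Fin.last t))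
        ∧ y (Fin.last t) + (h : ℤ) * (x (Fin.last t) - q.1) < q.2 ∧ q.2 ≤ ⌊N q.1⌋} := by
    ext q
    simp only [Set.mem_ofPred_eq, mem_Ioc, hx0, Int.le_floor, Int.lt_iff_add_one_le,
      zero_add, and_assoc]
  rw [hset, ncard_setOf_mem_lt_le _ (fun a => y (Fin.last t) + h * (x (Fin.last t) - a))
      (fun a => ⌊N a⌋), Nat.cast_sum, hx.monotone.sum_Ioc_eq_sum_sum_Ioc,
    sum_congr rfl fun i _ => sum_Ioc_toNat_floor_sub_line (hlt i) (hN i) (hslope i) (hvert i),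
    hgauss, hℓ, hx.monotone.sum_Ioc_eq_sum_sum_Ioc]
  simp only [← hE, ← hH, hlattice, hupper]
  rw [sum_sub_distrib, sum_add_distrib]

/-- **Lattice-point interpretation of the cut index `ind^h`.**
Let `N` be the piecewise linear convex function with vertices `(x_0,y_0), …, (x_t,y_t)`
(`0 = x_0 < … < x_t`, `y_0 > … > y_t`, strictly increasing slopes), with side lengths
`E_i`, heights `H_i` and degrees `d_i = gcd(E_i,H_i)`.  Let `h > 0` be an integer such that
every side has slope strictly less than `−h`, i.e. `H_i > h·E_i`, and set `ℓ = x_t`.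
Then the number of lattice points `(a,b)` with `1 ≤ a ≤ x_t`, `b ≤ N(a)` and
`b > y_t + h(x_t − a)` equals
`Σ_i (E_iH_i − E_i − H_i + d_i)/2 + Σ_{i<j} E_iH_j − hℓ(ℓ−1)/2`. -/
theorem stmt_15 (t : ℕ) (ht : 1 ≤ t) (x y : Fin (t + 1) → ℤ)
    (hx0 : x 0 = 0) (hx : StrictMono x) (hy : StrictAnti y)
    (hslopes : ∀ i j : Fin t, i < j →
      ((y i.succ - y i.castSucc : ℚ) / (x i.succ - x i.castSucc : ℚ))
        < ((y j.succ - y j.castSucc : ℚ) / (x j.succ - x j.castSucc : ℚ)))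
    (N : ℚ → ℚ)
    (hN : ∀ i : Fin t, ∀ a : ℚ, (x i.castSucc : ℚ) ≤ a → a ≤ (x i.succ : ℚ) →
      N a = (y i.castSucc : ℚ)
        + ((y i.succ : ℚ) - (y i.castSucc : ℚ)) / ((x i.succ : ℚ) - (x i.castSucc : ℚ))
          * (a - (x i.castSucc : ℚ)))
    (E H : Fin t → ℤ)
    (hE : ∀ i, E i = x i.succ - x i.castSucc)
    (hH : ∀ i, H i = y i.castSucc - y i.succ)
    (d : Fin t → ℤ) (hd : ∀ i, d i = Int.gcd (E i) (H i))
    (h : ℕ) (hh : 0 < h)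
    (hcut : ∀ i, (h : ℤ) * E i < H i)
    (ℓ : ℤ) (hℓ : ℓ = x (Fin.last t)) :
    ({q : ℤ × ℤ | 1 ≤ q.1 ∧ q.1 ≤ x (Fin.last t)
        ∧ y (Fin.last t) + (h : ℤ) * (x (Fin.last t) - q.1) < q.2
        ∧ (q.2 : ℚ) ≤ N (q.1 : ℚ)}.ncard : ℤ)
      = ∑ i, (E i * H i - E i - H i + d i) / 2
        + ∑ i, ∑ j, (if i < j then E i * H j else 0)
        - (h : ℤ) * ℓ * (ℓ - 1) / 2 :=
  stmt_15_general t x y hx0 hx N hN E H hE hH d hd h hcut ℓ hℓ
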